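/- arXiv:1403.6083 — 2 statements merged into one kernel-verified Lean document; each statement's English description precedes it below -/
import Mathlib

section
/- Let R = ℚ[a, x_1, …, x_b] and N ≥ 1. For the quotient module M = R/(a x_1^N, a x_2^N, …, a x_b^N), considered as a ℚ[a]-module, M is isomorphic to M₁^{⊗b} ⊕ (⊕_{j=0}^{b-1} M₀^{⊗j} ⊗ M₁^{⊗(b-1-j)}) ⊗ M_∞, where M₀ = ℚ[a] ⊕ ℚ[a], M₁ = ℚ[a]^{⊕N}, M_∞ = ⊕_{l=0}^{∞} ℚ[a]/(a), and all tensor products are over ℚ[a]. -/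
open Polynomial DirectSum

/-- `n`-fold tensor power (over `ℚ[a]`) of a `ℚ[a]`-module, with `M^{⊗0} = ℚ[a]`. -/
noncomputable def tpow (M : ModuleCat (Polynomial ℚ)) : ℕ → ModuleCat (Polynomial ℚ)
  | 0 => ModuleCat.of (Polynomial ℚ) (Polynomial ℚ)
  | n + 1 => ModuleCat.of (Polynomial ℚ) (TensorProduct (Polynomial ℚ) (tpow M n) M)

/-- `M₀ = ℚ[a] ⊕ ℚ[a]`, a free `ℚ[a]`-module of rank 2. -/
noncomputable def M₀ : ModuleCat (Polynomial ℚ) :=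
  ModuleCat.of (Polynomial ℚ) (Polynomial ℚ × Polynomial ℚ)

/-- `M₁ = ℚ[a]^{⊕N}`, a free `ℚ[a]`-module of rank `N`. -/
noncomputable def M₁ (N : ℕ) : ModuleCat (Polynomial ℚ) :=
  ModuleCat.of (Polynomial ℚ) (Fin N → Polynomial ℚ)

/-- `M_∞ = ⊕_{l=0}^∞ ℚ[a]/(a)`, a countable direct sum of copies of `ℚ[a]/(a)`. -/
noncomputable def Minf : ModuleCat (Polynomial ℚ) :=
  ModuleCat.of (Polynomial ℚ)
    (⨁ _ : ℕ, (Polynomial ℚ ⧸ (Ideal.span {Polynomial.X} : Ideal (Polynomial ℚ))))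

/-!
Over `ℚ[a]` the monomials form a basis of `R`, and `(a x₁^N, …, a x_b^N)` is spanned by the
`a x^e` with some `e_i ≥ N`. So `M` is free on the `N^b` monomials with all exponents `< N`,
matching the basis of `M₁^{⊗b}`, plus a `ℚ[a]/(a)`-vector space on the remaining monomials,
countably many and infinitely many as soon as `b ≥ 1`. On the other side, a free module of rank
`r` tensored with `M_∞` is a direct sum of `r · ℵ₀` copies of `ℚ[a]/(a)`, and the summand
`j = b - 1` has positive rank, so the torsion parts agree as well.
-/

open TensorProduct in
noncomputable def Module.Basis.tensorDirectSumEquiv {R M Q ι κ : Type*} [CommRing R]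
    [AddCommGroup M] [Module R M] [AddCommGroup Q] [Module R Q] [DecidableEq ι] [DecidableEq κ]
    (v : Module.Basis ι R M) :
    M ⊗[R] (⨁ _ : κ, Q) ≃ₗ[R] (ι × κ →₀ Q) :=
  TensorProduct.congr v.repr (finsuppLEquivDirectSum R Q κ).symm ≪≫ₗ
    TensorProduct.finsuppScalarLeft R (κ →₀ Q) ι ≪≫ₗ (Finsupp.curryLinearEquiv R).symm

section MonomialQuotient

open MvPolynomial (coeff monomial basisMonomials)

variable {R σ : Type*} [CommRing R] (r : R) (N : ℕ)

theorem mem_span_C_mul_X_pow_iff {f : MvPolynomial σ R} :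
    f ∈ Ideal.span (Set.range fun i => MvPolynomial.C r * MvPolynomial.X i ^ N) ↔
      ∀ e, coeff e f ∈ Ideal.span {r} ∧ ((∀ i, e i < N) → coeff e f = 0) := by
  classical
  constructor
  · intro hf
    induction hf using Submodule.span_induction with
    | mem g hg =>
      obtain ⟨i, rfl⟩ := hg
      intro e
      dsimp only
      rw [MvPolynomial.C_mul_X_pow_eq_monomial, MvPolynomial.coeff_monomial]
      split_ifs with he
      · subst he
        exact ⟨Ideal.mem_span_singleton_self r, fun h => absurd (h i) (by simp)⟩
      · simp
    | zero => simp
    | add g h _ _ hg hh =>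
      intro e
      rw [MvPolynomial.coeff_add]
      exact ⟨add_mem (hg e).1 (hh e).1, fun he => by rw [(hg e).2 he, (hh e).2 he, add_zero]⟩
    | smul g h _ hh =>
      intro e
      rw [smul_eq_mul, MvPolynomial.coeff_mul]
      refine ⟨Ideal.sum_mem _ fun d _ => Ideal.mul_mem_left _ _ (hh d.2).1, fun he => ?_⟩
      refine Finset.sum_eq_zero fun d hd => ?_
      have hde : d.2 ≤ e := by
        rw [Finset.HasAntidiagonal.mem_antidiagonal] at hd
        exact hd ▸ le_add_self
      rw [(hh d.2).2 fun i => (hde i).trans_lt (he i), mul_zero]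
  · intro h
    rw [MvPolynomial.as_sum f]
    refine Ideal.sum_mem _ fun e he => ?_
    obtain ⟨c, hc⟩ := Ideal.mem_span_singleton'.mp (h e).1
    obtain ⟨i, hi⟩ : ∃ i, N ≤ e i := by
      by_contra! hsmall
      exact MvPolynomial.mem_support_iff.mp he ((h e).2 hsmall)
    have hle : Finsupp.single i N ≤ e := Finsupp.single_le_iff.mpr hi
    have : monomial e (coeff e f) =
        monomial (e - Finsupp.single i N) c * (MvPolynomial.C r * MvPolynomial.X i ^ N) := by
      rw [MvPolynomial.C_mul_X_pow_eq_monomial, MvPolynomial.monomial_mul,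
        tsub_add_cancel_of_le hle, hc]
    rw [this]
    exact Ideal.mul_mem_left _ _ (Ideal.subset_span ⟨i, rfl⟩)

open Classical in
noncomputable def coeffSplit : MvPolynomial σ R →ₗ[R]
    ({e : σ →₀ ℕ // ∀ i, e i < N} →₀ R) × ({e : σ →₀ ℕ // ¬∀ i, e i < N} →₀ R ⧸ Ideal.span {r}) :=
  (LinearMap.id.prodMap (Finsupp.mapRange.linearMap (Ideal.span {r}).mkQ)) ∘ₗ
    ((basisMonomials σ R).repr ≪≫ₗ Finsupp.domLCongr (Equiv.sumCompl _).symm ≪≫ₗ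
      Finsupp.sumFinsuppLEquivProdFinsupp R).toLinearMap

theorem coeffSplit_surjective : Function.Surjective (coeffSplit (σ := σ) r N) :=
  (Function.Surjective.prodMap Function.surjective_id
    (Finsupp.mapRange_surjective _ (map_zero _) (Submodule.mkQ_surjective _))).comp
    (LinearEquiv.surjective _)

theorem coeffSplit_eq_zero_iff {f : MvPolynomial σ R} :
    coeffSplit r N f = 0 ↔ (∀ e, (∀ i, e i < N) → coeff e f = 0) ∧
      ∀ e, ¬(∀ i, e i < N) → coeff e f ∈ Ideal.span {r} := by
  have hrepr (e) : (basisMonomials σ R).repr f e = coeff e f := rfl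
  simp [coeffSplit, Prod.ext_iff, Finsupp.ext_iff, hrepr, Ideal.Quotient.eq_zero_iff_mem]

theorem ker_coeffSplit : LinearMap.ker (coeffSplit (σ := σ) r N) =
    (Ideal.span (Set.range fun i => MvPolynomial.C r * MvPolynomial.X i ^ N)).restrictScalars
      R := by
  ext f
  rw [LinearMap.mem_ker, Submodule.restrictScalars_mem, mem_span_C_mul_X_pow_iff,
    coeffSplit_eq_zero_iff]
  refine ⟨fun ⟨hsmall, hbig⟩ e => ?_, fun h => ⟨fun e he => (h e).2 he, fun e _ => (h e).1⟩⟩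
  by_cases he : ∀ i, e i < N
  · exact ⟨hsmall e he ▸ zero_mem _, hsmall e⟩
  · exact ⟨hbig e he, fun h => absurd h he⟩

noncomputable def quotientSpanCMulXPowEquiv :
    (MvPolynomial σ R ⧸ Ideal.span (Set.range fun i => MvPolynomial.C r * MvPolynomial.X i ^ N))
      ≃ₗ[R]
      ({e : σ →₀ ℕ // ∀ i, e i < N} →₀ R) × ({e : σ →₀ ℕ // ¬∀ i, e i < N} →₀ R ⧸ Ideal.span {r}) :=
  (Submodule.Quotient.restrictScalarsEquiv R _).symm ≪≫ₗ
    Submodule.quotEquivOfEq _ _ (ker_coeffSplit r N).symm ≪≫ₗ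
    (coeffSplit r N).quotKerEquivOfSurjective (coeffSplit_surjective r N)

end MonomialQuotient

section Exponents

variable {σ : Type*} (N : ℕ)

noncomputable def Finsupp.subtypeForallLtEquivFunFin [Finite σ] :
    {e : σ →₀ ℕ // ∀ i, e i < N} ≃ (σ → Fin N) where
  toFun e i := ⟨e.1 i, e.2 i⟩
  invFun g := ⟨Finsupp.equivFunOnFinite.symm fun i => g i, fun i => by simp⟩
  left_inv e := by ext; simp
  right_inv g := by ext; simp

instance [Nonempty σ] : Infinite {e : σ →₀ ℕ // ¬∀ i, e i < N} := by
  obtain ⟨i⟩ := ‹Nonempty σ›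
  refine Infinite.of_injective (fun n => ⟨Finsupp.single i (N + n), fun h => ?_⟩) fun m n h => ?_
  · simpa using h i
  · simpa using congr($h.1 i)

end Exponents

noncomputable def Module.Basis.tpow {M : ModuleCat ℚ[X]} {ι : Type*}
    (v : Module.Basis ι ℚ[X] M) :
    ∀ n, Module.Basis (Fin n → ι) ℚ[X] (tpow M n)
  | 0 => Module.Basis.singleton (Fin 0 → ι) ℚ[X]
  | n + 1 => ((v.tpow n).tensorProduct v).reindex
      ((Equiv.prodComm _ _).trans (Fin.snocEquiv fun _ => ι))

noncomputable def basisM₀ : Module.Basis (Fin 2) ℚ[X] M₀ := Module.Basis.finTwoProd ℚ[X]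

noncomputable def basisM₁ (N : ℕ) : Module.Basis (Fin N) ℚ[X] (M₁ N) := Pi.basisFun ℚ[X] (Fin N)

noncomputable def tpowProdDirectSumEquivFinsupp (b N : ℕ) :
    (tpow (M₁ N) b × ⨁ j : Fin b,
        TensorProduct ℚ[X] (TensorProduct ℚ[X] (tpow M₀ j) (tpow (M₁ N) (b - 1 - j))) Minf) ≃ₗ[ℚ[X]]
      ((Fin b → Fin N) →₀ ℚ[X]) ×
        ((Σ j : Fin b, ((Fin j → Fin 2) × (Fin (b - 1 - j) → Fin N)) × ℕ) →₀
          ℚ[X] ⧸ Ideal.span {(X : ℚ[X])}) :=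
  ((basisM₁ N).tpow b).repr.prodCongr <|
    DFinsupp.mapRange.linearEquiv (fun j : Fin b =>
      (((basisM₀.tpow j).tensorProduct ((basisM₁ N).tpow (b - 1 - j))).tensorDirectSumEquiv)) ≪≫ₗ
    (sigmaFinsuppLequivDFinsupp ℚ[X]).symm

theorem nonempty_subtype_not_forall_lt_equiv_sigma (b N : ℕ) :
    Nonempty ({e : Fin b →₀ ℕ // ¬∀ i, e i < N} ≃
      Σ j : Fin b, ((Fin j → Fin 2) × (Fin (b - 1 - j) → Fin N)) × ℕ) := by
  rcases b.eq_zero_or_pos with rfl | hb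
  · have : IsEmpty {e : Fin 0 →₀ ℕ // ¬∀ i, e i < N} := ⟨fun e => e.2 finZeroElim⟩
    exact ⟨Equiv.equivOfIsEmpty _ _⟩
  · have : Nonempty (Fin b) := ⟨⟨0, hb⟩⟩
    have : Infinite (Σ j : Fin b, ((Fin j → Fin 2) × (Fin (b - 1 - j) → Fin N)) × ℕ) :=
      Infinite.of_injective (fun n => ⟨⟨b - 1, by omega⟩, (0, fun i => absurd i.isLt (by simp)), n⟩)
        fun m n h => by simpa using h
    exact nonempty_equiv_of_countable

theorem stmt_8_general (b N : ℕ) :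
    Nonempty
      ((MvPolynomial (Fin b) (Polynomial ℚ) ⧸
          (Ideal.span (Set.range fun i : Fin b =>
            MvPolynomial.C Polynomial.X * (MvPolynomial.X i) ^ N) :
              Ideal (MvPolynomial (Fin b) (Polynomial ℚ))))
        ≃ₗ[Polynomial ℚ]
        ((tpow (M₁ N) b) ×
          ⨁ j : Fin b,
            TensorProduct (Polynomial ℚ)
              (TensorProduct (Polynomial ℚ) (tpow M₀ (j : ℕ)) (tpow (M₁ N) (b - 1 - (j : ℕ))))
              Minf)) := by
  obtain ⟨eBig⟩ := nonempty_subtype_not_forall_lt_equiv_sigma b N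
  exact ⟨quotientSpanCMulXPowEquiv X N ≪≫ₗ
    (Finsupp.domLCongr (Finsupp.subtypeForallLtEquivFunFin N)).prodCongr
      (Finsupp.domLCongr eBig) ≪≫ₗ
    (tpowProdDirectSumEquivFinsupp b N).symm⟩

/-- For `R = ℚ[a, x₁, …, x_b]` (realized as `MvPolynomial (Fin b) ℚ[a]`) and `N ≥ 1`,
the `ℚ[a]`-module `M = R/(a x₁^N, …, a x_b^N)` is isomorphic to
`M₁^{⊗b} ⊕ (⊕_{j=0}^{b-1} M₀^{⊗j} ⊗ M₁^{⊗(b-1-j)}) ⊗ M_∞`,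
all tensor products being over `ℚ[a]`. -/
theorem stmt_8 (b N : ℕ) (hN : 1 ≤ N) :
    Nonempty
      ((MvPolynomial (Fin b) (Polynomial ℚ) ⧸
          (Ideal.span (Set.range fun i : Fin b =>
            MvPolynomial.C Polynomial.X * (MvPolynomial.X i) ^ N) :
              Ideal (MvPolynomial (Fin b) (Polynomial ℚ))))
        ≃ₗ[Polynomial ℚ]
        ((tpow (M₁ N) b) ×
          ⨁ j : Fin b,
            TensorProduct (Polynomial ℚ)
              (TensorProduct (Polynomial ℚ) (tpow M₀ (j : ℕ)) (tpow (M₁ N) (b - 1 - (j : ℕ))))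
              Minf)) :=
  stmt_8_general b N
end

section
/- Let μ = τ_{i_1}⋯τ_{i_m} be a word in symbols τ₁,…,τ_{b−1} with m ≥ 2 such that i₁ = i_m = i and i_l < i for all 1 < l < m. Then, by a finite sequence of swaps of adjacent letters τ_p τ_q ↦ τ_q τ_p with |p − q| > 1, μ can be transformed into a word containing a consecutive segment of the form τ_j τ_j or τ_j τ_{j−1} τ_j for some j ≤ i. -/
/-!
Induction on `i`. If `τ_{i-1}` does not occur between the two copies of `τ_i`, every letter
in between commutes with `τ_i`, so the first `τ_i` slides right onto the last one, giving
`τ_i τ_i`. If it occurs exactly once, both copies of `τ_i` slide towards it, giving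
`τ_i τ_{i-1} τ_i`. If it occurs at least twice, the letters between its first two occurrences
are all `< i - 1`, so that factor has the same shape for `i - 1` and the induction hypothesis
applies to it.
-/

/-- A type I₁ move on words in the alphabet `{τ₁, τ₂, …}` (letters encoded by their
indices): swapping two adjacent letters `τ_p τ_q ↦ τ_q τ_p` when `|p − q| > 1`. -/
inductive SwapMove : List ℕ → List ℕ → Prop
  | swap (u v : List ℕ) (p q : ℕ) (h : p + 1 < q ∨ q + 1 < p) :
      SwapMove (u ++ [p, q] ++ v) (u ++ [q, p] ++ v)

open Relation

namespace SwapMove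

variable {a b : List ℕ}

theorem symm (h : SwapMove a b) : SwapMove b a := by
  obtain ⟨u, v, p, q, hpq⟩ := h
  exact swap u v q p hpq.symm

theorem append_left (w : List ℕ) (h : SwapMove a b) : SwapMove (w ++ a) (w ++ b) := by
  obtain ⟨u, v, p, q, hpq⟩ := h
  simpa only [List.append_assoc] using swap (w ++ u) v p q hpq

theorem append_right (z : List ℕ) (h : SwapMove a b) : SwapMove (a ++ z) (b ++ z) := by
  obtain ⟨u, v, p, q, hpq⟩ := h
  simpa only [List.append_assoc] using swap u (v ++ z) p q hpq

theorem reflTransGen_symm (h : ReflTransGen SwapMove a b) : ReflTransGen SwapMove b a := by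
  induction h with
  | refl => rfl
  | tail _ hbc ih => exact ih.head hbc.symm

theorem reflTransGen_append_append (w z : List ℕ) (h : ReflTransGen SwapMove a b) :
    ReflTransGen SwapMove (w ++ a ++ z) (w ++ b ++ z) :=
  h.lift (fun l => w ++ l ++ z) fun _ _ hab => (hab.append_left w).append_right z

theorem reflTransGen_cons_append_of_commute {p : ℕ} {l : List ℕ} (hl : ∀ x ∈ l, x + 1 < p)
    (v : List ℕ) : ReflTransGen SwapMove (p :: (l ++ v)) (l ++ p :: v) := by
  induction l with
  | nil => rfl
  | cons x l ih =>
    rw [List.forall_mem_cons] at hl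
    have hswap : SwapMove (p :: x :: (l ++ v)) (x :: p :: (l ++ v)) :=
      swap [] (l ++ v) p x (Or.inr hl.1)
    exact .head hswap (by simpa using reflTransGen_append_append [x] [] (ih hl.2))

theorem reflTransGen_append_cons_of_commute {p : ℕ} {l : List ℕ} (hl : ∀ x ∈ l, x + 1 < p)
    (v : List ℕ) : ReflTransGen SwapMove (l ++ p :: v) (p :: (l ++ v)) :=
  reflTransGen_symm (reflTransGen_cons_append_of_commute hl v)

theorem reflTransGen_collapse {p : ℕ} {l : List ℕ} (hl : ∀ x ∈ l, x + 1 < p) :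
    ReflTransGen SwapMove (p :: (l ++ [p])) (l ++ [p, p]) :=
  reflTransGen_cons_append_of_commute hl [p]

theorem reflTransGen_gather {p q : ℕ} {a c : List ℕ} (ha : ∀ x ∈ a, x + 1 < p)
    (hc : ∀ x ∈ c, x + 1 < p) :
    ReflTransGen SwapMove (p :: (a ++ q :: c ++ [p])) (a ++ [p, q, p] ++ c) := by
  have hright :
      ReflTransGen SwapMove (p :: (a ++ (q :: c ++ [p]))) (a ++ p :: q :: (c ++ [p])) :=
    reflTransGen_cons_append_of_commute ha _
  have hleft :=
    reflTransGen_append_append (a ++ [p, q]) [] (reflTransGen_append_cons_of_commute hc [])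
  simp only [List.append_assoc, List.cons_append, List.nil_append, List.append_nil]
    at hright hleft ⊢
  exact hright.trans hleft

end SwapMove

def HasShortRepeat (i : ℕ) (ν : List ℕ) : Prop :=
  ∃ (u v : List ℕ) (j : ℕ), j ≤ i ∧
    (ν = u ++ [j, j] ++ v ∨ ν = u ++ [j, j - 1, j] ++ v)

theorem HasShortRepeat.append_append {i : ℕ} {ν : List ℕ} (w z : List ℕ)
    (h : HasShortRepeat i ν) : HasShortRepeat i (w ++ ν ++ z) := by
  obtain ⟨u, v, j, hj, rfl | rfl⟩ := h
  · exact ⟨w ++ u, v ++ z, j, hj, Or.inl (by simp)⟩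
  · exact ⟨w ++ u, v ++ z, j, hj, Or.inr (by simp)⟩

theorem HasShortRepeat.mono {i k : ℕ} {ν : List ℕ} (hik : i ≤ k) (h : HasShortRepeat i ν) :
    HasShortRepeat k ν := by
  obtain ⟨u, v, j, hj, hν⟩ := h
  exact ⟨u, v, j, hj.trans hik, hν⟩

theorem add_one_lt_of_lt_of_pred_notMem {i : ℕ} {l : List ℕ} (hl : ∀ x ∈ l, x < i)
    (hpred : i - 1 ∉ l) : ∀ x ∈ l, x + 1 < i := fun x hx => by
  have : x ≠ i - 1 := fun h => hpred (h ▸ hx)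
  have := hl x hx
  omega

/-- Lemma 3.5 of Wu: if `μ = τ_{i₁}⋯τ_{i_m}` with `m ≥ 2`, `i₁ = i_m = i`, and
`i_l < i` for `1 < l < m`, then by a finite sequence of type I₁ moves `μ` can be
transformed into a word containing a segment `τ_j τ_j` or `τ_j τ_{j−1} τ_j` for some
`j ≤ i`. -/
theorem stmt_11 (i : ℕ) (mid : List ℕ) (hmid : ∀ x ∈ mid, x < i) :
    ∃ ν : List ℕ, Relation.ReflTransGen SwapMove (i :: (mid ++ [i])) ν ∧
      ∃ (u v : List ℕ) (j : ℕ), j ≤ i ∧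
        (ν = u ++ [j, j] ++ v ∨ ν = u ++ [j, j - 1, j] ++ v) := by
  induction i using Nat.strong_induction_on generalizing mid with
  | _ i ih =>
  by_cases hmem : i - 1 ∈ mid
  · obtain ⟨a, c, rfl, ha⟩ := List.eq_append_cons_of_mem hmem
    rw [List.forall_mem_append, List.forall_mem_cons] at hmid
    obtain ⟨ha_lt, hi, hc_lt⟩ := hmid
    by_cases hmem' : i - 1 ∈ c
    · obtain ⟨b, d, rfl, hb⟩ := List.eq_append_cons_of_mem hmem'
      rw [List.forall_mem_append] at hc_lt
      have hb_lt : ∀ x ∈ b, x < i - 1 := fun x hx => by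
        have := add_one_lt_of_lt_of_pred_notMem hc_lt.1 hb x hx
        omega
      obtain ⟨ν, hν, hrepeat⟩ := ih (i - 1) (by omega) b hb_lt
      refine ⟨i :: a ++ ν ++ (d ++ [i]), ?_,
        (HasShortRepeat.append_append _ _ hrepeat).mono (by omega)⟩
      simpa using SwapMove.reflTransGen_append_append (i :: a) (d ++ [i]) hν
    · exact ⟨_, SwapMove.reflTransGen_gather (add_one_lt_of_lt_of_pred_notMem ha_lt ha)
        (add_one_lt_of_lt_of_pred_notMem hc_lt hmem'), a, c, i, le_rfl, Or.inr rfl⟩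
  · exact ⟨_, SwapMove.reflTransGen_collapse (add_one_lt_of_lt_of_pred_notMem hmid hmem),
      mid, [], i, le_rfl, Or.inl (by simp)⟩
end
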